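/- Let p > 2, let 𝒫 = {(P^i, W^i) : i ∈ K} be a family of partition–weight pairs on a countable set A, and let X = X(𝒫). Suppose R : X → L_p([0,1]) is a bounded linear map and c₀ > 0 satisfies ‖Rx‖_{L_p} ≥ c₀‖x‖_X for all x ∈ X. Then there exists a constant C > 0, depending only on ‖R‖/c₀, such that for every partition Q of A and every map T : Q → 𝒫, one has ‖x‖_X ≥ C ‖x‖_{P(Q,T),W(Q,T)} for all x ∈ X. -/

import Mathlib

open scoped ENNReal
open MeasureTheory Filter

noncomputable section

variable {α : Type*}

/-- `P` is a partition of the type `α`: a collection of pairwise disjoint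
nonempty subsets of `α` whose union is all of `α`. -/
def IsPartition (P : Set (Set α)) : Prop :=
  (∀ N ∈ P, N.Nonempty) ∧ P.PairwiseDisjoint id ∧ ⋃₀ P = Set.univ

/-- A weight function takes values in `(0,1]`. -/
def IsWeight (W : α → ℝ) : Prop := ∀ a, W a ∈ Set.Ioc (0 : ℝ) 1

/-- `‖x‖_{P,W} = (Σ_{N∈P} (Σ_{j∈N} x_j² w_j²)^{p/2})^{1/p}`, valued in `[0,∞]`. -/
def pwNorm (p : ℝ) (P : Set (Set α)) (W : α → ℝ) (x : α → ℝ) : ℝ≥0∞ :=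
  (∑' N : P, (∑' j : N.1, ENNReal.ofReal ((x j.1) ^ 2 * (W j.1) ^ 2)) ^ (p / 2)) ^ (1 / p)

/-- A partition–weight pair on `α`. -/
abbrev PWPair (α : Type*) := Set (Set α) × (α → ℝ)

/-- Every member of the family is a genuine partition–weight pair. -/
def IsPWFamily (𝒞 : Set (PWPair α)) : Prop :=
  ∀ PW ∈ 𝒞, IsPartition PW.1 ∧ IsWeight PW.2

/-- `‖x‖_𝒞 = sup_{(P,W) ∈ 𝒞} ‖x‖_{P,W}`. -/
def famNorm (p : ℝ) (𝒞 : Set (PWPair α)) (x : α → ℝ) : ℝ≥0∞ :=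
  ⨆ PW ∈ 𝒞, pwNorm p PW.1 PW.2 x

/-- The block of the partition `Q` containing `b` (for a genuine partition this is
the unique element of `Q` containing `b`). -/
def blockOf (Q : Set (Set α)) (b : α) : Set α := ⋃₀ {q ∈ Q | b ∈ q}

/-- The partition `P(Q,T)` obtained from a partition `Q` and a choice `T` of a
partition–weight pair for each block of `Q`. -/
def envPartition (Q : Set (Set α)) (T : Set α → PWPair α) : Set (Set α) :=
  {K | K.Nonempty ∧ ∃ q ∈ Q, ∃ s ∈ (T q).1, K = q ∩ s}

/-- The weight `W(Q,T)`: on the block `q` of `Q` it is the weight chosen by `T q`. -/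
def envWeight (Q : Set (Set α)) (T : Set α → PWPair α) : α → ℝ :=
  fun b => (T (blockOf Q b)).2 b

/-- A family of partition–weight pairs satisfies the envelope property if it is
closed under the operation `(Q, T) ↦ (P(Q,T), W(Q,T))`. -/
def EnvelopeProp (𝒞 : Set (PWPair α)) : Prop :=
  ∀ Q : Set (Set α), IsPartition Q → ∀ T : Set α → PWPair α, (∀ q ∈ Q, T q ∈ 𝒞) →
    (envPartition Q T, envWeight Q T) ∈ 𝒞

/-- The family `𝒞̃` of all pairs `(P(Q,T), W(Q,T))`. -/
def envFam (𝒞 : Set (PWPair α)) : Set (PWPair α) :=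
  {PW | ∃ Q T, IsPartition Q ∧ (∀ q ∈ Q, T q ∈ 𝒞) ∧
    PW = (envPartition Q T, envWeight Q T)}

/-- The envelope norm generated by `𝒞`. -/
def envNorm (p : ℝ) (𝒞 : Set (PWPair α)) (x : α → ℝ) : ℝ≥0∞ := famNorm p (envFam 𝒞) x

/-!
For `p ≥ 2`, Clarkson's inequality `2 (‖f‖ᵖ + ‖g‖ᵖ) ≤ ‖f + g‖ᵖ + ‖f - g‖ᵖ` in `L_p` lets one
choose signs inductively so that `∑ ‖gᵢ‖ᵖ ≤ ‖∑ εᵢ gᵢ‖ᵖ`. Take `gᵢ = R (x 1_{qᵢ})` for finitely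
many blocks `qᵢ` of `Q`. Since `‖·‖_X` only depends on `|x|`, the signed vector `∑ εᵢ x 1_{qᵢ}` has
norm at most `‖x‖_X`, so `c₀ᵖ ∑_q ‖x 1_q‖_Xᵖ ≤ Mᵖ ‖x‖_Xᵖ`. On the other hand every block
`q ∩ s` of `P(Q,T)` lies in the block `s` of `T q`, where `W(Q,T)` is the weight of `T q`; hence
`‖x‖_{P(Q,T),W(Q,T)}ᵖ ≤ ∑_q ‖x 1_q‖_Xᵖ`, and `C = c₀ / max M c₀` works.
-/

open Function

lemma pwNorm_rpow {p : ℝ} (hp : p ≠ 0) (P : Set (Set α)) (W x : α → ℝ) :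
    pwNorm p P W x ^ p
      = ∑' N : P, (∑' j : N.1, ENNReal.ofReal (x j ^ 2 * W j ^ 2)) ^ (p / 2) := by
  rw [pwNorm, ← ENNReal.rpow_mul, one_div_mul_cancel hp, ENNReal.rpow_one]

lemma pwNorm_mono {p : ℝ} (hp : 0 ≤ p) (P : Set (Set α)) (W : α → ℝ) {x y : α → ℝ}
    (h : ∀ j, |x j| ≤ |y j|) : pwNorm p P W x ≤ pwNorm p P W y := by
  refine ENNReal.rpow_le_rpow (ENNReal.tsum_le_tsum fun N => ?_) (by positivity)
  refine ENNReal.rpow_le_rpow (ENNReal.tsum_le_tsum fun j => ?_) (by positivity)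
  exact ENNReal.ofReal_le_ofReal
    (mul_le_mul_of_nonneg_right (sq_le_sq.mpr (h j)) (sq_nonneg _))

lemma famNorm_mono {p : ℝ} (hp : 0 ≤ p) (𝒞 : Set (PWPair α)) {x y : α → ℝ}
    (h : ∀ j, |x j| ≤ |y j|) : famNorm p 𝒞 x ≤ famNorm p 𝒞 y :=
  iSup₂_mono fun PW _ => pwNorm_mono hp PW.1 PW.2 h

lemma famNorm_indicator_le {p : ℝ} (hp : 0 ≤ p) (𝒞 : Set (PWPair α)) (s : Set α)
    (x : α → ℝ) : famNorm p 𝒞 (s.indicator x) ≤ famNorm p 𝒞 x :=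
  famNorm_mono hp 𝒞 fun j => by
    simpa only [Real.norm_eq_abs] using norm_indicator_le_norm_self (s := s) (f := x) (a := j)

lemma pwNorm_le_famNorm {p : ℝ} {𝒞 : Set (PWPair α)} {PW : PWPair α} (hPW : PW ∈ 𝒞)
    (x : α → ℝ) : pwNorm p PW.1 PW.2 x ≤ famNorm p 𝒞 x :=
  le_iSup₂_of_le PW hPW le_rfl

lemma blockOf_eq {Q : Set (Set α)} (hQ : Q.PairwiseDisjoint id) {q : Set α} (hq : q ∈ Q)
    {j : α} (hj : j ∈ q) : blockOf Q j = q := by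
  refine subset_antisymm ?_ fun a ha => ⟨q, ⟨hq, hj⟩, ha⟩
  rintro a ⟨q', ⟨hq', hjq'⟩, haq'⟩
  rwa [hQ.elim hq' hq (Set.not_disjoint_iff.mpr ⟨j, hjq', hj⟩)] at haq'

lemma envWeight_eq {Q : Set (Set α)} (hQ : Q.PairwiseDisjoint id) (T : Set α → PWPair α)
    {q : Set α} (hq : q ∈ Q) {j : α} (hj : j ∈ q) : envWeight Q T j = (T q).2 j := by
  rw [envWeight, blockOf_eq hQ hq hj]

lemma tsum_inter_envWeight_le {Q : Set (Set α)} (hQ : Q.PairwiseDisjoint id)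
    (T : Set α → PWPair α) {q : Set α} (hq : q ∈ Q) (s : Set α) (x : α → ℝ) :
    ∑' j : ↥(q ∩ s), ENNReal.ofReal (x j ^ 2 * envWeight Q T j ^ 2)
      ≤ ∑' j : s, ENNReal.ofReal (q.indicator x j ^ 2 * (T q).2 j ^ 2) :=
  calc ∑' j : ↥(q ∩ s), ENNReal.ofReal (x j ^ 2 * envWeight Q T j ^ 2)
      = ∑' j : ↥(q ∩ s), ENNReal.ofReal (q.indicator x j ^ 2 * (T q).2 j ^ 2) :=
        tsum_congr fun j => by
          rw [Set.indicator_of_mem j.2.1, envWeight_eq hQ T hq j.2.1]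
    _ ≤ _ := ENNReal.tsum_mono_subtype
        (fun j => ENNReal.ofReal (q.indicator x j ^ 2 * (T q).2 j ^ 2)) Set.inter_subset_right

lemma pwNorm_envPartition_rpow_le {p : ℝ} (hp : 0 < p) {𝒞 : Set (PWPair α)}
    {Q : Set (Set α)} (hQ : Q.PairwiseDisjoint id) {T : Set α → PWPair α}
    (hT : ∀ q ∈ Q, T q ∈ 𝒞) (x : α → ℝ) :
    pwNorm p (envPartition Q T) (envWeight Q T) x ^ p
      ≤ ∑' q : Q, famNorm p 𝒞 ((q : Set α).indicator x) ^ p := by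
  let mass (i : Σ q : Q, (T q).1) : ℝ≥0∞ :=
    (∑' j : (i.2 : Set α),
      ENNReal.ofReal (((i.1 : Set α).indicator x j) ^ 2 * (T i.1).2 j ^ 2)) ^ (p / 2)
  have hblock : ∀ K : envPartition Q T,
      ∃ i : Σ q : Q, (T q).1, (K : Set α) = (i.1 : Set α) ∩ (i.2 : Set α) := by
    rintro ⟨K, -, q, hq, s, hs, rfl⟩
    exact ⟨⟨⟨q, hq⟩, ⟨s, hs⟩⟩, rfl⟩
  choose e he using hblock
  have he_inj : Injective e := fun K K' h =>
    Subtype.ext ((he K).trans (h ▸ (he K').symm))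
  calc pwNorm p (envPartition Q T) (envWeight Q T) x ^ p
      ≤ ∑' K, mass (e K) := by
        rw [pwNorm_rpow hp.ne']
        refine ENNReal.tsum_le_tsum fun K => ENNReal.rpow_le_rpow ?_ (by positivity)
        rw [he K]
        exact tsum_inter_envWeight_le hQ T (e K).1.2 _ x
    _ ≤ ∑' i, mass i := ENNReal.tsum_comp_le_tsum_of_injective he_inj mass
    _ = ∑' q : Q, pwNorm p (T q).1 (T q).2 ((q : Set α).indicator x) ^ p := by
        rw [ENNReal.tsum_sigma']
        refine tsum_congr fun q => ?_
        rw [pwNorm_rpow hp.ne']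
    _ ≤ ∑' q : Q, famNorm p 𝒞 ((q : Set α).indicator x) ^ p :=
        ENNReal.tsum_le_tsum fun q =>
          ENNReal.rpow_le_rpow (pwNorm_le_famNorm (hT q q.2) _) hp.le

section Clarkson

variable {E : Type*} [NormedAddCommGroup E] [InnerProductSpace ℝ E] {p : ℝ}

lemma two_mul_add_norm_rpow_le (hp : 2 ≤ p) (a b : E) :
    2 * (‖a‖ ^ p + ‖b‖ ^ p) ≤ ‖a + b‖ ^ p + ‖a - b‖ ^ p := by
  have hr : 1 ≤ p / 2 := by linarith
  have hsq : ∀ c : E, ‖c‖ ^ p = (‖c‖ ^ 2) ^ (p / 2) := fun c => by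
    rw [← Real.rpow_natCast, ← Real.rpow_mul (norm_nonneg c)]
    congr 1
    push_cast
    ring
  have hpar := parallelogram_law_with_norm ℝ a b
  have hmid := (convexOn_rpow hr).2 (Set.mem_Ici.mpr (sq_nonneg ‖a + b‖))
    (Set.mem_Ici.mpr (sq_nonneg ‖a - b‖)) (by norm_num : (0 : ℝ) ≤ 1 / 2)
    (by norm_num : (0 : ℝ) ≤ 1 / 2) (add_halves 1)
  simp only [smul_eq_mul] at hmid
  rw [hsq a, hsq b, hsq (a + b), hsq (a - b)]
  calc 2 * ((‖a‖ ^ 2) ^ (p / 2) + (‖b‖ ^ 2) ^ (p / 2))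
      ≤ 2 * (‖a‖ ^ 2 + ‖b‖ ^ 2) ^ (p / 2) := by
        gcongr
        exact Real.add_rpow_le_rpow_add (sq_nonneg _) (sq_nonneg _) hr
    _ = 2 * (1 / 2 * ‖a + b‖ ^ 2 + 1 / 2 * ‖a - b‖ ^ 2) ^ (p / 2) := by
        congr 2
        linarith
    _ ≤ (‖a + b‖ ^ 2) ^ (p / 2) + (‖a - b‖ ^ 2) ^ (p / 2) := by linarith

lemma two_mul_add_enorm_rpow_le (hp : 2 ≤ p) (a b : E) :
    2 * (‖a‖ₑ ^ p + ‖b‖ₑ ^ p) ≤ ‖a + b‖ₑ ^ p + ‖a - b‖ₑ ^ p := by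
  have hp0 : 0 ≤ p := by linarith
  have h := ENNReal.ofReal_le_ofReal (two_mul_add_norm_rpow_le hp a b)
  rw [ENNReal.ofReal_mul zero_le_two, ENNReal.ofReal_add (by positivity) (by positivity),
    ENNReal.ofReal_add (by positivity) (by positivity), ENNReal.ofReal_ofNat] at h
  simpa only [← ENNReal.ofReal_rpow_of_nonneg (norm_nonneg _) hp0, ofReal_norm] using h

variable {X : Type*} [MeasurableSpace X] {μ : Measure X} [Fact (1 ≤ ENNReal.ofReal p)]

omit [InnerProductSpace ℝ E] in
lemma MeasureTheory.Lp.enorm_rpow_eq_lintegral (hp : 0 < p)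
    (f : Lp E (ENNReal.ofReal p) μ) :
    ‖f‖ₑ ^ p = ∫⁻ x, ‖f x‖ₑ ^ p ∂μ := by
  rw [Lp.enorm_def, eLpNorm_eq_eLpNorm' (by simpa using hp) ENNReal.ofReal_ne_top,
    ENNReal.toReal_ofReal hp.le, lintegral_rpow_enorm_eq_rpow_eLpNorm' hp]

/-- Clarkson's inequality for `p ≥ 2`. -/
lemma MeasureTheory.Lp.two_mul_add_enorm_rpow_le (hp : 2 ≤ p)
    (f g : Lp E (ENNReal.ofReal p) μ) :
    2 * (‖f‖ₑ ^ p + ‖g‖ₑ ^ p) ≤ ‖f + g‖ₑ ^ p + ‖f - g‖ₑ ^ p := by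
  have hp0 : 0 < p := by linarith
  have hf := (Lp.aestronglyMeasurable f).enorm.pow_const p
  have hfg : AEMeasurable (fun x => ‖f x + g x‖ₑ ^ p) μ :=
    ((Lp.aestronglyMeasurable f).add (Lp.aestronglyMeasurable g)).enorm.pow_const p
  have hadd : ∫⁻ x, ‖(f + g) x‖ₑ ^ p ∂μ = ∫⁻ x, ‖f x + g x‖ₑ ^ p ∂μ := by
    refine lintegral_congr_ae ?_
    filter_upwards [Lp.coeFn_add f g] with x hx
    rw [hx, Pi.add_apply]
  have hsub : ∫⁻ x, ‖(f - g) x‖ₑ ^ p ∂μ = ∫⁻ x, ‖f x - g x‖ₑ ^ p ∂μ := by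
    refine lintegral_congr_ae ?_
    filter_upwards [Lp.coeFn_sub f g] with x hx
    rw [hx, Pi.sub_apply]
  rw [Lp.enorm_rpow_eq_lintegral hp0, Lp.enorm_rpow_eq_lintegral hp0,
    Lp.enorm_rpow_eq_lintegral hp0, Lp.enorm_rpow_eq_lintegral hp0, hadd, hsub,
    ← lintegral_add_left' hf, ← lintegral_const_mul' 2 _ (by norm_num),
    ← lintegral_add_left' hfg]
  exact lintegral_mono fun x => _root_.two_mul_add_enorm_rpow_le hp (f x) (g x)

lemma MeasureTheory.Lp.exists_sign_enorm_rpow_add_le (hp : 2 ≤ p)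
    (f g : Lp E (ENNReal.ofReal p) μ) :
    ∃ σ : ℝ, |σ| = 1 ∧ ‖f‖ₑ ^ p + ‖g‖ₑ ^ p ≤ ‖f + σ • g‖ₑ ^ p := by
  by_contra! h
  have hplus := h 1 (by simp)
  have hminus := h (-1) (by simp)
  rw [one_smul] at hplus
  rw [neg_one_smul, ← sub_eq_add_neg] at hminus
  exact (Lp.two_mul_add_enorm_rpow_le hp f g).not_gt
    (two_mul (‖f‖ₑ ^ p + ‖g‖ₑ ^ p) ▸ ENNReal.add_lt_add hplus hminus)

lemma MeasureTheory.Lp.exists_signs_sum_enorm_rpow_le (hp : 2 ≤ p) {ι : Type*} (s : Finset ι)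
    (g : ι → Lp E (ENNReal.ofReal p) μ) :
    ∃ ε : ι → ℝ, (∀ i, |ε i| = 1) ∧ ∑ i ∈ s, ‖g i‖ₑ ^ p ≤ ‖∑ i ∈ s, ε i • g i‖ₑ ^ p := by
  classical
  induction s using Finset.induction_on with
  | empty => exact ⟨1, fun _ => abs_one, by simp⟩
  | @insert a s ha ih =>
    obtain ⟨ε, hε, hle⟩ := ih
    obtain ⟨σ, hσ, hσle⟩ := Lp.exists_sign_enorm_rpow_add_le hp (∑ i ∈ s, ε i • g i) (g a)
    have hsum : ∑ i ∈ s, update ε a σ i • g i = ∑ i ∈ s, ε i • g i :=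
      Finset.sum_congr rfl fun i hi => by rw [update_of_ne (ne_of_mem_of_not_mem hi ha)]
    refine ⟨update ε a σ, fun i => ?_, ?_⟩
    · rcases eq_or_ne i a with rfl | hia
      · simpa using hσ
      · simpa [update_of_ne hia] using hε i
    · rw [Finset.sum_insert ha, Finset.sum_insert ha, hsum, update_self, add_comm,
        add_comm (σ • g a)]
      exact le_trans (by gcongr) hσle

end Clarkson

lemma map_sum_of_map_add {ι E F : Type*} [AddCommMonoid E] [AddCommGroup F] (R : E → F)
    {S : Set E} (hadd : ∀ x ∈ S, ∀ y ∈ S, R (x + y) = R x + R y) (s : Finset ι) (v : ι → E)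
    (hv : ∀ t ⊆ s, ∑ i ∈ t, v i ∈ S) : R (∑ i ∈ s, v i) = ∑ i ∈ s, R (v i) := by
  classical
  induction s using Finset.induction_on with
  | empty =>
    have h0 : (0 : E) ∈ S := by simpa using hv ∅ (Finset.empty_subset _)
    simpa using hadd 0 h0 0 h0
  | @insert a s ha ih =>
    have hv' : ∀ t ⊆ s, ∑ i ∈ t, v i ∈ S := fun t ht => hv t (ht.trans (Finset.subset_insert a s))
    have ha' : v a ∈ S := by simpa using hv {a} (by simp)
    rw [Finset.sum_insert ha, Finset.sum_insert ha, hadd _ ha' _ (hv' s subset_rfl), ih hv']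

lemma abs_sum_mul_indicator_le {ι : Type*} {B : ι → Set α} (hB : Pairwise (Disjoint on B))
    {ε : ι → ℝ} (hε : ∀ i, |ε i| ≤ 1) (s : Finset ι) (x : α → ℝ) (j : α) :
    |∑ i ∈ s, ε i * (B i).indicator x j| ≤ |x j| := by
  by_cases h : ∃ i ∈ s, j ∈ B i
  · obtain ⟨i, hi, hj⟩ := h
    rw [Finset.sum_eq_single_of_mem i hi fun k _ hki => by
      rw [Set.indicator_of_notMem (Set.disjoint_left.mp (hB hki.symm) hj), mul_zero],
      Set.indicator_of_mem hj, abs_mul]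
    exact mul_le_of_le_one_left (abs_nonneg _) (hε i)
  · simp only [not_exists, not_and] at h
    rw [Finset.sum_eq_zero fun i hi => by rw [Set.indicator_of_notMem (h i hi), mul_zero],
      abs_zero]
    exact abs_nonneg _

section LowerEstimate

variable {E : Type*} [NormedAddCommGroup E] [InnerProductSpace ℝ E] {X : Type*}
  [MeasurableSpace X] {μ : Measure X} {p : ℝ} [Fact (1 ≤ ENNReal.ofReal p)]
  {𝒞 : Set (PWPair α)} {R : (α → ℝ) → Lp E (ENNReal.ofReal p) μ} {M c₀ : ℝ}

lemma tsum_famNorm_indicator_rpow_le (hp : 2 ≤ p)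
    (hadd : ∀ x y, famNorm p 𝒞 x < ⊤ → famNorm p 𝒞 y < ⊤ → R (x + y) = R x + R y)
    (hsmul : ∀ (r : ℝ) (x), famNorm p 𝒞 x < ⊤ → R (r • x) = r • R x)
    (hub : ∀ x, famNorm p 𝒞 x < ⊤ →
      ENNReal.ofReal ‖R x‖ ≤ ENNReal.ofReal M * famNorm p 𝒞 x)
    (hlb : ∀ x, famNorm p 𝒞 x < ⊤ →
      ENNReal.ofReal c₀ * famNorm p 𝒞 x ≤ ENNReal.ofReal ‖R x‖)
    {ι : Type*} {B : ι → Set α} (hB : Pairwise (Disjoint on B)) {x : α → ℝ}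
    (hx : famNorm p 𝒞 x < ⊤) :
    ∑' i, (ENNReal.ofReal c₀ * famNorm p 𝒞 ((B i).indicator x)) ^ p
      ≤ (ENNReal.ofReal M * famNorm p 𝒞 x) ^ p := by
  have hp0 : 0 ≤ p := by linarith
  set F := famNorm p 𝒞
  have hblock : ∀ i, F ((B i).indicator x) < ⊤ := fun i =>
    (famNorm_indicator_le hp0 𝒞 (B i) x).trans_lt hx
  rw [ENNReal.tsum_eq_iSup_sum]
  refine iSup_le fun s => ?_
  obtain ⟨ε, hε, hsigns⟩ := Lp.exists_signs_sum_enorm_rpow_le hp s fun i => R ((B i).indicator x)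
  have hsigned : ∀ t : Finset ι, F (∑ i ∈ t, ε i • (B i).indicator x) ≤ F x := fun t =>
    famNorm_mono hp0 𝒞 fun j => by
      simpa only [Finset.sum_apply, Pi.smul_apply, smul_eq_mul] using
        abs_sum_mul_indicator_le hB (fun i => (hε i).le) t x j
  have hlin : R (∑ i ∈ s, ε i • (B i).indicator x) = ∑ i ∈ s, ε i • R ((B i).indicator x) := by
    rw [map_sum_of_map_add R (S := {v | F v < ⊤}) (fun v hv w hw => hadd v w hv hw) s _
      fun t _ => (hsigned t).trans_lt hx]
    exact Finset.sum_congr rfl fun i _ => hsmul _ _ (hblock i)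
  calc ∑ i ∈ s, (ENNReal.ofReal c₀ * F ((B i).indicator x)) ^ p
      ≤ ∑ i ∈ s, ‖R ((B i).indicator x)‖ₑ ^ p := by
        gcongr with i
        rw [← ofReal_norm]
        exact hlb _ (hblock i)
    _ ≤ ‖R (∑ i ∈ s, ε i • (B i).indicator x)‖ₑ ^ p := hlin ▸ hsigns
    _ ≤ (ENNReal.ofReal M * F (∑ i ∈ s, ε i • (B i).indicator x)) ^ p := by
        gcongr
        rw [← ofReal_norm]
        exact hub _ ((hsigned s).trans_lt hx)
    _ ≤ (ENNReal.ofReal M * F x) ^ p := by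
        gcongr
        exact hsigned s

end LowerEstimate

theorem statement9_general {A : Type*} (p : ℝ) (hp : 2 < p)
    [Fact (1 ≤ ENNReal.ofReal p)]
    (𝒞 : Set (PWPair A))
    (R : (A → ℝ) → MeasureTheory.Lp ℝ (ENNReal.ofReal p)
      (volume : Measure ↥(Set.Icc (0 : ℝ) 1)))
    (M c₀ : ℝ) (hc₀ : 0 < c₀)
    (hadd : ∀ x y, famNorm p 𝒞 x < ⊤ → famNorm p 𝒞 y < ⊤ → R (x + y) = R x + R y)
    (hsmul : ∀ (r : ℝ) (x), famNorm p 𝒞 x < ⊤ → R (r • x) = r • R x)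
    (hub : ∀ x, famNorm p 𝒞 x < ⊤ →
      ENNReal.ofReal ‖R x‖ ≤ ENNReal.ofReal M * famNorm p 𝒞 x)
    (hlb : ∀ x, famNorm p 𝒞 x < ⊤ →
      ENNReal.ofReal c₀ * famNorm p 𝒞 x ≤ ENNReal.ofReal ‖R x‖) :
    ∃ C : ℝ, 0 < C ∧
      ∀ Q : Set (Set A), IsPartition Q → ∀ T : Set A → PWPair A, (∀ q ∈ Q, T q ∈ 𝒞) →
        ∀ x : A → ℝ, famNorm p 𝒞 x < ⊤ →
          ENNReal.ofReal C * pwNorm p (envPartition Q T) (envWeight Q T) x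
            ≤ famNorm p 𝒞 x := by
  have hp0 : 0 < p := by linarith
  have hm : 0 < max M c₀ := lt_max_of_lt_right hc₀
  refine ⟨c₀ / max M c₀, div_pos hc₀ hm, fun Q hQ T hT x hx => ?_⟩
  have hQ' : Pairwise (Disjoint on fun q : Q => (q : Set A)) := fun q q' h =>
    hQ.2.1 q.2 q'.2 (Subtype.coe_injective.ne h)
  have hroot : ENNReal.ofReal c₀ * pwNorm p (envPartition Q T) (envWeight Q T) x
      ≤ ENNReal.ofReal M * famNorm p 𝒞 x := by
    rw [← ENNReal.rpow_le_rpow_iff hp0]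
    calc (ENNReal.ofReal c₀ * pwNorm p (envPartition Q T) (envWeight Q T) x) ^ p
        = ENNReal.ofReal c₀ ^ p * pwNorm p (envPartition Q T) (envWeight Q T) x ^ p :=
          ENNReal.mul_rpow_of_nonneg _ _ hp0.le
      _ ≤ ENNReal.ofReal c₀ ^ p * ∑' q : Q, famNorm p 𝒞 ((q : Set A).indicator x) ^ p := by
          gcongr
          exact pwNorm_envPartition_rpow_le hp0 hQ.2.1 hT x
      _ = ∑' q : Q, (ENNReal.ofReal c₀ * famNorm p 𝒞 ((q : Set A).indicator x)) ^ p := by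
          rw [← ENNReal.tsum_mul_left]
          simp_rw [ENNReal.mul_rpow_of_nonneg _ _ hp0.le]
      _ ≤ (ENNReal.ofReal M * famNorm p 𝒞 x) ^ p :=
          tsum_famNorm_indicator_rpow_le hp.le hadd hsmul hub hlb hQ' hx
  rw [ENNReal.ofReal_div_of_pos hm, div_eq_mul_inv, mul_right_comm, ← div_eq_mul_inv,
    ENNReal.div_le_iff (ENNReal.ofReal_pos.mpr hm).ne' ENNReal.ofReal_ne_top,
    mul_comm (famNorm p 𝒞 x)]
  exact hroot.trans (by gcongr; exact le_max_left M c₀)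

/-- (Lower estimate.) Let `p > 2`, let `𝒞` be a family of
partition–weight pairs on a countable set `A` and `X = X(𝒞)`.  If `R : X → L_p([0,1])`
is a bounded (by `M`) linear map with `‖Rx‖ ≥ c₀ ‖x‖_X`, then there is a constant
`C > 0`, depending only on `M / c₀`, such that for every partition `Q` of `A` and every
`T : Q → 𝒞`, `‖x‖_X ≥ C ‖x‖_{P(Q,T),W(Q,T)}` for all `x ∈ X`. -/
theorem statement9 {A : Type*} [Countable A] (p : ℝ) (hp : 2 < p)
    [Fact (1 ≤ ENNReal.ofReal p)]
    (𝒞 : Set (PWPair A)) (h𝒞 : IsPWFamily 𝒞)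
    (R : (A → ℝ) → MeasureTheory.Lp ℝ (ENNReal.ofReal p)
      (volume : Measure ↥(Set.Icc (0 : ℝ) 1)))
    (M c₀ : ℝ) (hc₀ : 0 < c₀)
    (hadd : ∀ x y, famNorm p 𝒞 x < ⊤ → famNorm p 𝒞 y < ⊤ → R (x + y) = R x + R y)
    (hsmul : ∀ (r : ℝ) (x), famNorm p 𝒞 x < ⊤ → R (r • x) = r • R x)
    (hub : ∀ x, famNorm p 𝒞 x < ⊤ →
      ENNReal.ofReal ‖R x‖ ≤ ENNReal.ofReal M * famNorm p 𝒞 x)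
    (hlb : ∀ x, famNorm p 𝒞 x < ⊤ →
      ENNReal.ofReal c₀ * famNorm p 𝒞 x ≤ ENNReal.ofReal ‖R x‖) :
    ∃ C : ℝ, 0 < C ∧
      ∀ Q : Set (Set A), IsPartition Q → ∀ T : Set A → PWPair A, (∀ q ∈ Q, T q ∈ 𝒞) →
        ∀ x : A → ℝ, famNorm p 𝒞 x < ⊤ →
          ENNReal.ofReal C * pwNorm p (envPartition Q T) (envWeight Q T) x
            ≤ famNorm p 𝒞 x :=
  statement9_general p hp 𝒞 R M c₀ hc₀ hadd hsmul hub hlb
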